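/- arXiv:2605.21946 — 4 statements merged into one kernel-verified Lean document; each statement's English description precedes it below -/
import Mathlib

section
/- Wick formula for PSD permanents: let V ∈ ℂ^{n×d} with rows v₁,…,vₙ and let A = V V†. Then per(A) = π^{−d} ∫_{ℂ^d} ∏_{i=1}^n |vᵢ† z|² e^{−z†z} dz, where the integral is with respect to Lebesgue measure on ℂ^d ≅ ℝ^{2d}. -/
/-!
Expanding `∏ᵢ |vᵢ† z|² = ∏ᵢ (vᵢ† z) · conj (vᵢ† z)` multilinearly writes the integrand as a sum,
over pairs of maps `f g : [n] → [d]`, of monomials `∏ᵢ z_{f i} · ∏ᵢ conj z_{g i}` times the Gaussian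
weight. The weight factorises over the coordinates, and on `ℂ` the moments
`∫ z ^ p * conj z ^ q * exp (-|z|²)` vanish for `p ≠ q` by rotation invariance and equal `π p!` for
`p = q`. So a monomial integrates to `π ^ d` times `∏ₐ (#f⁻¹(a))!` when `f` and `g` have fibres of
the same sizes, which is exactly the number of permutations `σ` with `f ∘ σ = g`. Expanding
`per (V V†) = ∑_σ ∏ᵢ ∑ₐ V_{σ i, a} conj V_{i, a}` over the maps `f` gives the same sum.
-/

open MeasureTheory Matrix Complex Finset Equiv
open scoped ComplexConjugate Nat Real

namespace Complex

lemma integral_norm_pow_mul_exp_neg_sq (k : ℕ) :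
    ∫ z : ℂ, ‖z‖ ^ k * Real.exp (-‖z‖ ^ 2) = π * Real.Gamma (k / 2 + 1) := by
  have h := integral_rpow_mul_exp_neg_rpow one_le_two
    (by linarith [k.cast_nonneg (α := ℝ)] : (-2 : ℝ) < k)
  simp only [Real.rpow_natCast, Real.rpow_two] at h
  rw [h]
  ring_nf

lemma integrable_norm_pow_mul_exp_neg_sq (k : ℕ) :
    Integrable fun z : ℂ ↦ ‖z‖ ^ k * Real.exp (-‖z‖ ^ 2) := by
  refine Integrable.of_integral_ne_zero ?_
  rw [integral_norm_pow_mul_exp_neg_sq]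
  exact (mul_pos Real.pi_pos (Real.Gamma_pos_of_pos (by positivity))).ne'

lemma integrable_pow_mul_conj_pow_mul_exp_neg_normSq (p q : ℕ) :
    Integrable fun z : ℂ ↦ z ^ p * conj z ^ q * cexp (-normSq z) := by
  refine (integrable_norm_pow_mul_exp_neg_sq (p + q)).mono' (by fun_prop)
    (.of_forall fun z ↦ le_of_eq ?_)
  rw [norm_mul, norm_mul, norm_pow, norm_pow, norm_conj, norm_exp, neg_re, ofReal_re,
    normSq_eq_norm_sq, pow_add]

lemma integral_pow_mul_conj_pow_mul_exp_neg_normSq_self (p : ℕ) :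
    ∫ z : ℂ, z ^ p * conj z ^ p * cexp (-normSq z) = π * p ! := by
  have h (z : ℂ) : z ^ p * conj z ^ p * cexp (-normSq z) =
      ((‖z‖ ^ (2 * p) * Real.exp (-‖z‖ ^ 2) : ℝ) : ℂ) := by
    rw [← mul_pow, mul_conj, normSq_eq_norm_sq, pow_mul]
    push_cast
    rfl
  simp_rw [h, integral_complex_ofReal, integral_norm_pow_mul_exp_neg_sq]
  push_cast
  rw [mul_div_cancel_left₀ _ two_ne_zero, Real.Gamma_nat_eq_factorial]
  norm_cast

lemma integral_pow_mul_conj_pow_mul_exp_neg_normSq_of_ne {p q : ℕ} (hpq : p ≠ q) :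
    ∫ z : ℂ, z ^ p * conj z ^ q * cexp (-normSq z) = 0 := by
  set F : ℂ → ℂ := fun z ↦ z ^ p * conj z ^ q * cexp (-normSq z)
  -- rotating by `u = exp (iπ / (p - q))` multiplies the integrand by `u ^ p * conj u ^ q = -1`
  set u : Circle := Circle.exp (π / ((p : ℝ) - q))
  have hu : (u : ℂ) ^ p * conj (u : ℂ) ^ q = -1 := by
    rw [Circle.coe_exp, ← exp_conj, map_mul, conj_ofReal, conj_I, ← exp_nat_mul, ← exp_nat_mul,
      ← exp_add]
    have hpq' : (p : ℂ) - q ≠ 0 := sub_ne_zero.mpr (mod_cast hpq)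
    convert exp_pi_mul_I using 2
    push_cast
    field_simp
    ring
  have hF (z : ℂ) : F (rotation u z) = -F z := by
    have : normSq (u * z) = normSq z := by simp [normSq_eq_norm_sq, Circle.norm_coe]
    simp only [F, rotation_apply, this, mul_pow, map_mul]
    linear_combination (z ^ p * conj z ^ q * cexp (-normSq z)) * hu
  have h := (rotation u).measurePreserving.integral_comp
    (rotation u).toHomeomorph.measurableEmbedding F
  simp_rw [hF, integral_neg] at h
  exact neg_eq_self.mp h

lemma integral_pow_mul_conj_pow_mul_exp_neg_normSq (p q : ℕ) :
    ∫ z : ℂ, z ^ p * conj z ^ q * cexp (-normSq z) = π * ((if p = q then p ! else 0 : ℕ) : ℂ) := by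
  split_ifs with h
  · rw [h, integral_pow_mul_conj_pow_mul_exp_neg_normSq_self]
  · rw [integral_pow_mul_conj_pow_mul_exp_neg_normSq_of_ne h, Nat.cast_zero, mul_zero]

end Complex

section Permutations

variable {ι κ : Type*} [Fintype ι] [DecidableEq κ]

@[to_additive]
lemma Fintype.prod_comp_eq_prod_pow_card_fiber [Fintype κ] {M : Type*} [CommMonoid M] (g : ι → κ)
    (f : κ → M) : ∏ i, f (g i) = ∏ j, f j ^ Fintype.card {i // g i = j} := by
  simp [← Fintype.prod_fiberwise' g f]

lemma exists_perm_comp_eq_of_card_fiber_eq {f g : ι → κ}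
    (h : ∀ a, Fintype.card {i // f i = a} = Fintype.card {i // g i = a}) :
    ∃ τ : Perm ι, f ∘ τ = g := by
  let e (a : κ) : {i // g i = a} ≃ {i // f i = a} := Fintype.equivOfCardEq (h a).symm
  refine ⟨((sigmaFiberEquiv g).symm.trans (sigmaCongrRight e)).trans (sigmaFiberEquiv f),
    funext fun i ↦ ?_⟩
  exact (e (g i) ⟨i, rfl⟩).2

variable [Fintype κ] [DecidableEq ι]

lemma card_perm_comp_eq (f g : ι → κ) :
    Fintype.card {σ : Perm ι // f ∘ σ = g} =
      ∏ a, if Fintype.card {i // f i = a} = Fintype.card {i // g i = a}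
        then (Fintype.card {i // f i = a})! else 0 := by
  by_cases h : ∀ a, Fintype.card {i // f i = a} = Fintype.card {i // g i = a}
  · obtain ⟨τ, rfl⟩ := exists_perm_comp_eq_of_card_fiber_eq h
    rw [Finset.prod_congr rfl fun a _ ↦ if_pos (h a), ← DomMulAct.stabilizer_card f]
    refine Fintype.card_congr ((Equiv.mulRight τ).subtypeEquiv fun σ ↦ ?_).symm
    rw [coe_mulRight, Perm.coe_mul, ← Function.comp_assoc]
    exact (τ.surjective.injective_comp_right.eq_iff).symm
  · obtain ⟨a, ha⟩ := not_forall.mp h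
    rw [Finset.prod_eq_zero (mem_univ a) (if_neg ha), Fintype.card_eq_zero_iff]
    refine ⟨fun ⟨σ, hσ⟩ ↦ ha ?_⟩
    subst hσ
    exact (Fintype.card_congr (σ.subtypeEquiv fun _ ↦ Iff.rfl)).symm

lemma Matrix.permanent_mul_eq_sum_card {R : Type*} [CommSemiring R] (B : Matrix ι κ R)
    (C : Matrix κ ι R) :
    (B * C).permanent = ∑ f : ι → κ, ∑ g : ι → κ,
      (Fintype.card {σ : Perm ι // f ∘ σ = g} : R) * (∏ i, C (f i) i) * ∏ i, B i (g i) := by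
  have hσ (f : ι → κ) (σ : Perm ι) : ∏ i, B (σ i) (f i) = ∏ i, B i ((f ∘ ⇑σ⁻¹) i) :=
    (Fintype.prod_equiv σ _ _ fun i ↦ by simp)
  calc (B * C).permanent
      = ∑ σ : Perm ι, ∑ f : ι → κ, ∏ i, B (σ i) (f i) * C (f i) i := by
        simp only [permanent, mul_apply, Fintype.prod_sum]
    _ = ∑ f : ι → κ, ∑ σ : Perm ι, (∏ i, C (f i) i) * ∏ i, B i ((f ∘ ⇑σ) i) := by
        rw [Finset.sum_comm]
        refine Fintype.sum_congr _ _ fun f ↦ ?_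
        rw [← Equiv.sum_comp (Equiv.inv (Perm ι))]
        simp [Finset.prod_mul_distrib, hσ, mul_comm]
    _ = _ := by
        refine Fintype.sum_congr _ _ fun f ↦ ?_
        rw [Fintype.sum_comp_eq_sum_nsmul_card_fiber (fun σ : Perm ι ↦ f ∘ ⇑σ)
          (fun g ↦ (∏ i, C (f i) i) * ∏ i, B i (g i))]
        simp only [nsmul_eq_mul, mul_assoc]

end Permutations

section Monomials

variable {ι κ : Type*} [Fintype ι] [Fintype κ] [DecidableEq κ]

lemma prod_mul_prod_conj_mul_exp_eq_prod (f g : ι → κ) (z : κ → ℂ) :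
    (∏ i, z (f i)) * (∏ i, conj (z (g i))) * cexp (-∑ a, (normSq (z a) : ℂ)) =
      ∏ a, z a ^ Fintype.card {i // f i = a} * conj (z a) ^ Fintype.card {i // g i = a} *
        cexp (-normSq (z a)) := by
  rw [Fintype.prod_comp_eq_prod_pow_card_fiber f z,
    Fintype.prod_comp_eq_prod_pow_card_fiber g fun a ↦ conj (z a), ← Finset.sum_neg_distrib,
    exp_sum, ← Finset.prod_mul_distrib, ← Finset.prod_mul_distrib]

lemma integrable_prod_mul_prod_conj_mul_exp (f g : ι → κ) :
    Integrable fun z : κ → ℂ ↦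
      (∏ i, z (f i)) * (∏ i, conj (z (g i))) * cexp (-∑ a, (normSq (z a) : ℂ)) := by
  simp_rw [prod_mul_prod_conj_mul_exp_eq_prod]
  exact Integrable.fintype_prod fun a ↦ integrable_pow_mul_conj_pow_mul_exp_neg_normSq _ _

lemma integral_prod_mul_prod_conj_mul_exp [DecidableEq ι] (f g : ι → κ) :
    ∫ z : κ → ℂ, (∏ i, z (f i)) * (∏ i, conj (z (g i))) * cexp (-∑ a, (normSq (z a) : ℂ)) =
      π ^ Fintype.card κ * Fintype.card {σ : Perm ι // f ∘ σ = g} := by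
  simp_rw [prod_mul_prod_conj_mul_exp_eq_prod, integral_fintype_prod_volume_eq_prod
    (fun a w ↦ w ^ Fintype.card {i // f i = a} * conj w ^ Fintype.card {i // g i = a} *
      cexp (-normSq w)), integral_pow_mul_conj_pow_mul_exp_neg_normSq, card_perm_comp_eq,
    Finset.prod_mul_distrib, Finset.prod_const, Finset.card_univ, Nat.cast_prod]

end Monomials

section Wick

variable {ι κ : Type*} [Fintype ι] [DecidableEq ι] [Fintype κ]

lemma prod_normSq_dotProduct_eq_sum (V : Matrix ι κ ℂ) (z : κ → ℂ) :
    ((∏ i, normSq (star (V i) ⬝ᵥ z) : ℝ) : ℂ) =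
      ∑ f : ι → κ, ∑ g : ι → κ, (∏ i, conj (V i (f i))) * (∏ i, V i (g i)) *
        ((∏ i, z (f i)) * ∏ i, conj (z (g i))) := by
  have hconj (i : ι) : conj (star (V i) ⬝ᵥ z) = ∑ a, V i a * conj (z a) := by
    simp [dotProduct, map_sum]
  simp_rw [ofReal_prod, ← mul_conj, Finset.prod_mul_distrib, hconj, dotProduct, Pi.star_apply,
    RCLike.star_def, Fintype.prod_sum, Finset.sum_mul_sum, Finset.prod_mul_distrib]
  refine Fintype.sum_congr _ _ fun f ↦ Fintype.sum_congr _ _ fun g ↦ ?_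
  ring

theorem integral_prod_normSq_mul_exp_eq_permanent [DecidableEq κ] (V : Matrix ι κ ℂ) :
    ((∫ z : κ → ℂ, (∏ i, normSq (star (V i) ⬝ᵥ z)) * Real.exp (-∑ a, normSq (z a)) : ℝ) : ℂ) =
      π ^ Fintype.card κ * (V * Vᴴ).permanent := by
  have h (z : κ → ℂ) :
      (((∏ i, normSq (star (V i) ⬝ᵥ z)) * Real.exp (-∑ a, normSq (z a)) : ℝ) : ℂ) =
        ∑ f : ι → κ, ∑ g : ι → κ, (∏ i, conj (V i (f i))) * (∏ i, V i (g i)) *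
          ((∏ i, z (f i)) * (∏ i, conj (z (g i))) * cexp (-∑ a, (normSq (z a) : ℂ))) := by
    rw [ofReal_mul, prod_normSq_dotProduct_eq_sum, Finset.sum_mul]
    push_cast
    simp_rw [Finset.sum_mul, mul_assoc]
  have hintegrable (f g : ι → κ) := integrable_prod_mul_prod_conj_mul_exp f g
  simp_rw [← integral_complex_ofReal, h]
  rw [integral_finsetSum _ fun f _ ↦
    integrable_finsetSum _ fun g _ ↦ (hintegrable f g).const_mul _]
  simp_rw [integral_finsetSum _ fun g _ ↦ (hintegrable _ g).const_mul _, integral_const_mul,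
    integral_prod_mul_prod_conj_mul_exp, permanent_mul_eq_sum_card, Finset.mul_sum,
    conjTranspose_apply, RCLike.star_def]
  refine Fintype.sum_congr _ _ fun f ↦ Fintype.sum_congr _ _ fun g ↦ ?_
  ring

end Wick

theorem stmt3 {n d : ℕ} (V : Matrix (Fin n) (Fin d) ℂ) :
    (V * Vᴴ).permanent =
      Complex.ofReal (((Real.pi) ^ d)⁻¹ *
        ∫ z : Fin d → ℂ,
          (∏ i, Complex.normSq (star (V i) ⬝ᵥ z)) *
            Real.exp (-(∑ a, Complex.normSq (z a)))) := by
  rw [ofReal_mul, integral_prod_normSq_mul_exp_eq_permanent, Fintype.card_fin, ofReal_inv,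
    ofReal_pow, inv_mul_cancel_left₀ (pow_ne_zero _ (ofReal_ne_zero.mpr Real.pi_ne_zero))]
end

section
/- Let V ∈ ℂ^{n×d} have full column rank and rows v₁,…,vₙ, all nonzero. Then the supremum defining Φ(V) = sup over Hermitian positive definite d×d matrices X of φ_V(X) = ∑_{i=1}^n log(vᵢ† X vᵢ) + log det X − tr X + d is finite and is attained at some Hermitian positive definite matrix X⋆. -/
/-!
For positive definite `X` with eigenvalues `λ` and `s = tr X`, the bound `vᵢ† X vᵢ ≤ s ‖vᵢ‖²`
gives `φ_V(X) - φ_V(1) ≤ n log s + ∑ₖ log λₖ - s + d`. On the superlevel set `φ_V ≥ φ_V(1)`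
the right-hand side is nonnegative, which bounds `s` (the linear term beats the logarithms) and
then bounds every `log λₖ` from below. So that superlevel set lies in a Loewner interval
`[ε, T]` with `ε > 0`; this interval is compact and consists of positive definite matrices, on
which `φ_V` is continuous, and a maximiser of `φ_V` over it is a global maximiser.
-/

open Matrix
open scoped ComplexOrder MatrixOrder

noncomputable def phiV {n d : ℕ} (V : Matrix (Fin n) (Fin d) ℂ)
    (X : Matrix (Fin d) (Fin d) ℂ) : ℝ :=
  (∑ i, Real.log ((star (V i) ⬝ᵥ X *ᵥ V i).re)) + Real.log X.det.re - X.trace.re + d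

theorem CStarAlgebra.isCompact_Icc {A : Type*} [CStarAlgebra A] [PartialOrder A] [StarOrderedRing A]
    [FiniteDimensional ℂ A] (a b : A) : IsCompact (Set.Icc a b) := by
  have : ProperSpace A := FiniteDimensional.proper ℂ A
  refine Metric.isCompact_of_isClosed_isBounded isClosed_Icc ?_
  refine (Metric.isBounded_closedBall (x := a) (r := ‖b - a‖)).subset fun x hx => ?_
  rw [Metric.mem_closedBall, dist_eq_norm]
  exact CStarAlgebra.norm_le_norm_of_nonneg_of_le (sub_nonneg.2 hx.1) (sub_le_sub_right hx.2 a)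

namespace Matrix

variable {n : Type*} [Fintype n] [DecidableEq n]

theorem isCompact_Icc (A B : Matrix n n ℂ) : IsCompact (Set.Icc A B) := by
  open scoped Matrix.Norms.L2Operator in exact CStarAlgebra.isCompact_Icc A B

variable {𝕜 : Type*} [RCLike 𝕜]

theorem IsHermitian.algebraMap_le_iff {A : Matrix n n 𝕜} (hA : A.IsHermitian) (c : ℝ) :
    algebraMap ℝ _ c ≤ A ↔ ∀ i, c ≤ hA.eigenvalues i := by
  rw [algebraMap_le_iff_le_spectrum hA, hA.spectrum_real_eq_range_eigenvalues,
    Set.forall_mem_range]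

theorem IsHermitian.le_algebraMap_iff {A : Matrix n n 𝕜} (hA : A.IsHermitian) (c : ℝ) :
    A ≤ algebraMap ℝ _ c ↔ ∀ i, hA.eigenvalues i ≤ c := by
  rw [le_algebraMap_iff_spectrum_le hA, hA.spectrum_real_eq_range_eigenvalues,
    Set.forall_mem_range]

theorem posDef_of_algebraMap_le {A : Matrix n n 𝕜} {c : ℝ} (hc : 0 < c)
    (h : algebraMap ℝ _ c ≤ A) : A.PosDef := by
  simpa [Algebra.algebraMap_eq_smul_one] using PosDef.posSemidef_add h (PosDef.one.smul hc)

theorem IsHermitian.re_trace_eq_sum_eigenvalues {A : Matrix n n 𝕜} (hA : A.IsHermitian) :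
    RCLike.re A.trace = ∑ i, hA.eigenvalues i := by
  simp [hA.trace_eq_sum_eigenvalues]

theorem PosSemidef.re_dotProduct_mulVec_le {A : Matrix n n 𝕜} (hA : A.PosSemidef) (v : n → 𝕜) :
    RCLike.re (star v ⬝ᵥ A *ᵥ v) ≤ RCLike.re A.trace * RCLike.re (star v ⬝ᵥ v) := by
  have hle : A ≤ algebraMap ℝ _ (RCLike.re A.trace) := by
    rw [hA.1.le_algebraMap_iff, hA.1.re_trace_eq_sum_eigenvalues]
    exact fun i => Finset.single_le_sum (fun j _ => hA.eigenvalues_nonneg j) (Finset.mem_univ i)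
  have := RCLike.nonneg_iff.1 ((le_iff.1 hle).dotProduct_mulVec_nonneg v) |>.1
  simpa [Algebra.algebraMap_eq_smul_one, sub_mulVec, smul_mulVec, dotProduct_smul,
    RCLike.smul_re] using this

end Matrix

namespace Real

theorem le_of_sub_le_mul_log {s c N : ℝ} (hs : 0 < s) (hN : 0 ≤ N) (h : s - c ≤ N * log s) :
    s ≤ 2 * (c + N * log (2 * N + 1)) := by
  have ha : 0 < 2 * N + 1 := by linarith
  -- `log (s / a) ≤ s / a - 1` with `a = 2N + 1`, chosen so that `N * (s / a) ≤ s / 2`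
  have hlog : log s ≤ s / (2 * N + 1) + log (2 * N + 1) := by
    have := log_le_sub_one_of_pos (div_pos hs ha)
    rw [log_div hs.ne' ha.ne'] at this
    linarith
  have hNs : N * (s / (2 * N + 1)) ≤ s / 2 := by
    rw [mul_div_assoc', div_le_div_iff₀ ha two_pos]
    nlinarith
  nlinarith [mul_le_mul_of_nonneg_left hlog hN]

end Real

open Real in
theorem exists_bounds_of_log_barrier (n : ℕ) (ι : Type*) [Fintype ι] :
    ∃ ε T : ℝ, 0 < ε ∧ ∀ μ : ι → ℝ, (∀ k, 0 < μ k) →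
      0 ≤ n * log (∑ k, μ k) + ∑ k, log (μ k) - ∑ k, μ k + Fintype.card ι →
      ∀ k, ε ≤ μ k ∧ μ k ≤ T := by
  classical
  set d : ℝ := (Fintype.card ι : ℝ)
  set m : ℝ := n + d
  set T : ℝ := max 1 (2 * (d + m * log (2 * m + 1)))
  have hT : 1 ≤ T := le_max_left _ _
  have hlogT : 0 ≤ log T := log_nonneg hT
  refine ⟨exp (-(d + m * log T)), T, exp_pos _, fun μ hμ hbarrier k => ?_⟩
  set s := ∑ k, μ k
  have hμs : ∀ j, μ j ≤ s := fun j =>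
    Finset.single_le_sum (fun i _ => (hμ i).le) (Finset.mem_univ j)
  have hs : 0 < s := (hμ k).trans_le (hμs k)
  have hsum_log_le_s : ∑ j, log (μ j) ≤ d * log s := by
    simpa [d] using Finset.sum_le_sum fun j (_ : j ∈ Finset.univ) => log_le_log (hμ j) (hμs j)
  have hsT : s ≤ T := by
    refine (le_of_sub_le_mul_log hs (by positivity) ?_).trans (le_max_right _ _)
    nlinarith
  have hlogs : log s ≤ log T := log_le_log hs hsT
  have hsum_log_le_T : ∑ j, log (μ j) ≤ log (μ k) + d * log T := by
    rw [← Finset.add_sum_erase _ _ (Finset.mem_univ k)]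
    gcongr
    calc ∑ j ∈ Finset.univ.erase k, log (μ j) ≤ ∑ j ∈ Finset.univ.erase k, log T :=
          Finset.sum_le_sum fun j _ => log_le_log (hμ j) ((hμs j).trans hsT)
      _ ≤ ∑ j, log T := Finset.sum_le_sum_of_subset_of_nonneg (Finset.erase_subset _ _)
          fun _ _ _ => hlogT
      _ = d * log T := by simp [d]
  refine ⟨?_, (hμs k).trans hsT⟩
  rw [← exp_log (hμ k), exp_le_exp]
  nlinarith [mul_le_mul_of_nonneg_left hlogs (Nat.cast_nonneg (α := ℝ) n)]

section phiV

variable {n d : ℕ} (V : Matrix (Fin n) (Fin d) ℂ)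

theorem phiV_one : phiV V 1 = ∑ i, Real.log (star (V i) ⬝ᵥ V i).re := by
  simp [phiV]

theorem continuousOn_phiV (hrows : ∀ i, V i ≠ 0) : ContinuousOn (phiV V) {X | X.PosDef} := by
  have hquad : ∀ i, Continuous fun X : Matrix (Fin d) (Fin d) ℂ => (star (V i) ⬝ᵥ X *ᵥ V i).re :=
    fun i => by fun_prop
  refine ((continuousOn_finsetSum _ fun i _ => ?_).add ?_ |>.sub ?_).add continuousOn_const
  · exact (hquad i).continuousOn.log fun X hX => (hX.re_dotProduct_pos (hrows i)).ne'
  · exact (Complex.continuous_re.comp (continuous_id.matrix_det)).continuousOn.log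
      fun X hX => (Complex.pos_iff.1 hX.det_pos).1.ne'
  · exact (Complex.continuous_re.comp (continuous_id.matrix_trace)).continuousOn

theorem phiV_sub_phiV_one_le (hrows : ∀ i, V i ≠ 0) {X : Matrix (Fin d) (Fin d) ℂ}
    (hX : X.PosDef) :
    phiV V X - phiV V 1 ≤ n * Real.log (∑ k, hX.1.eigenvalues k) +
      ∑ k, Real.log (hX.1.eigenvalues k) - ∑ k, hX.1.eigenvalues k + d := by
  set μ := hX.1.eigenvalues
  have htr : X.trace.re = ∑ k, μ k := by simpa using hX.1.re_trace_eq_sum_eigenvalues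
  have hdet : Real.log X.det.re = ∑ k, Real.log (μ k) := by
    rw [hX.1.det_eq_prod_eigenvalues, ← Real.log_prod fun k _ => (hX.eigenvalues_pos k).ne']
    norm_cast
  have hquad : ∀ i, Real.log (star (V i) ⬝ᵥ X *ᵥ V i).re ≤
      Real.log (∑ k, μ k) + Real.log (star (V i) ⬝ᵥ V i).re := fun i => by
    have hq : 0 < (star (V i) ⬝ᵥ X *ᵥ V i).re := hX.re_dotProduct_pos (hrows i)
    have hb : 0 < (star (V i) ⬝ᵥ V i).re :=
      (Complex.pos_iff.1 (dotProduct_star_self_pos_iff.2 (hrows i))).1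
    have hle := hX.posSemidef.re_dotProduct_mulVec_le (V i)
    simp only [RCLike.re_to_complex, htr] at hle
    rw [← Real.log_mul (pos_of_mul_pos_left (hq.trans_le hle) hb.le).ne' hb.ne']
    exact Real.log_le_log hq hle
  have := Finset.sum_le_sum fun i (_ : i ∈ Finset.univ) => hquad i
  simp only [Finset.sum_add_distrib, Finset.sum_const, Finset.card_univ, Fintype.card_fin,
    nsmul_eq_mul] at this
  rw [phiV, phiV_one, htr, hdet]
  linarith

theorem exists_loewner_bounds_of_phiV_one_le (hrows : ∀ i, V i ≠ 0) :
    ∃ ε T : ℝ, 0 < ε ∧ ∀ X : Matrix (Fin d) (Fin d) ℂ, X.PosDef → phiV V 1 ≤ phiV V X →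
      X ∈ Set.Icc (algebraMap ℝ _ ε) (algebraMap ℝ _ T) := by
  obtain ⟨ε, T, hε, hbounds⟩ := exists_bounds_of_log_barrier n (Fin d)
  refine ⟨ε, T, hε, fun X hX hφ => ?_⟩
  have hμ := hbounds _ hX.eigenvalues_pos <| by
    have := phiV_sub_phiV_one_le V hrows hX
    rw [Fintype.card_fin]
    linarith
  exact ⟨(hX.1.algebraMap_le_iff ε).2 fun k => (hμ k).1,
    (hX.1.le_algebraMap_iff T).2 fun k => (hμ k).2⟩

end phiV

theorem stmt4_general {n d : ℕ} (V : Matrix (Fin n) (Fin d) ℂ)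
    (hrows : ∀ i, V i ≠ 0) :
    ∃ Xstar : Matrix (Fin d) (Fin d) ℂ, Xstar.PosDef ∧
      IsGreatest {r : ℝ | ∃ X : Matrix (Fin d) (Fin d) ℂ, X.PosDef ∧ r = phiV V X}
        (phiV V Xstar) := by
  obtain ⟨ε, T, hε, hK⟩ := exists_loewner_bounds_of_phiV_one_le V hrows
  have hKpos : ∀ X ∈ Set.Icc (algebraMap ℝ (Matrix (Fin d) (Fin d) ℂ) ε) (algebraMap ℝ _ T),
      X.PosDef := fun X hX => posDef_of_algebraMap_le hε hX.1
  have h1K := hK 1 PosDef.one le_rfl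
  obtain ⟨Xstar, hXstar, hmax⟩ := (Matrix.isCompact_Icc _ _).exists_isMaxOn ⟨1, h1K⟩
    ((continuousOn_phiV V hrows).mono hKpos)
  refine ⟨Xstar, hKpos _ hXstar, ⟨Xstar, hKpos _ hXstar, rfl⟩, ?_⟩
  rintro _ ⟨X, hX, rfl⟩
  rcases le_total (phiV V 1) (phiV V X) with h | h
  · exact hmax (hK X hX h)
  · exact h.trans (hmax h1K)

theorem stmt4 {n d : ℕ} (V : Matrix (Fin n) (Fin d) ℂ)
    (hV : V.rank = d) (hrows : ∀ i, V i ≠ 0) :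
    ∃ Xstar : Matrix (Fin d) (Fin d) ℂ, Xstar.PosDef ∧
      IsGreatest {r : ℝ | ∃ X : Matrix (Fin d) (Fin d) ℂ, X.PosDef ∧ r = phiV V X}
        (phiV V Xstar) :=
  stmt4_general V hrows
end

section
/- Invariance of the relaxation: let V, W ∈ ℂ^{n×d} both have full column rank and nonzero rows, and suppose V V† = W W†. Then Φ(V) = Φ(W), where Φ(V) = sup over Hermitian positive definite d×d matrices X of ∑_{i=1}^n log(vᵢ† X vᵢ) + log det X − tr X + d, with v₁,…,vₙ the rows of V, and Φ(W) is defined analogously with the rows of W. -/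
open MeasureTheory Matrix
open scoped ComplexOrder

/-- `Φ(V) = sup_{X ≻ 0} φ_V(X)`. -/
noncomputable def PhiV {n d : ℕ} (V : Matrix (Fin n) (Fin d) ℂ) : ℝ :=
  sSup {r : ℝ | ∃ X : Matrix (Fin d) (Fin d) ℂ, X.PosDef ∧ r = phiV V X}

/-! Since `V` has full column rank, `V Vᴴ = W Wᴴ` forces `W = V U` with `U` unitary, so the rows
are related by `wᵢ = Uᵀ vᵢ`. Then `φ_W(X) = φ_V(Ū X Uᵀ)`, and `X ↦ Ū X Uᵀ` is a bijection of the
positive definite cone that preserves `det` and `tr`; hence both suprema run over the same set. -/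

namespace Matrix

variable {l m n R : Type*} [Fintype m] [Fintype n]

theorem isUnit_of_rank_eq_card [DecidableEq n] [Field R] {A : Matrix n n R}
    (h : A.rank = Fintype.card n) : IsUnit A := by
  rw [← mulVec_surjective_iff_isUnit, ← coe_mulVecLin, ← LinearMap.range_eq_top]
  apply Submodule.eq_top_of_finrank_eq
  rw [← rank, h, Module.finrank_fintype_fun_eq_card]

theorem mul_eq_zero_of_self_mul_conjTranspose_eq [Ring R] [PartialOrder R] [StarRing R]
    [StarOrderedRing R] [NoZeroDivisors R] {A B : Matrix m n R} {C : Matrix l m R}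
    (hAB : A * Aᴴ = B * Bᴴ) (hCA : C * A = 0) : C * B = 0 := by
  rw [← self_mul_conjTranspose_eq_zero]
  calc C * B * (C * B)ᴴ = C * (B * Bᴴ) * Cᴴ := by
        simp only [conjTranspose_mul, Matrix.mul_assoc]
    _ = C * A * (C * A)ᴴ := by rw [← hAB]; simp only [conjTranspose_mul, Matrix.mul_assoc]
    _ = 0 := by rw [hCA, Matrix.zero_mul]

/-- With `G = Vᴴ V` invertible, `U = G⁻¹ Vᴴ W` works: `V G⁻¹ Vᴴ` is the orthogonal projection onto
the column space of `V`, which is also that of `W` because `V Vᴴ = W Wᴴ`. -/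
theorem exists_mem_unitaryGroup_of_self_mul_conjTranspose_eq [DecidableEq n] [Field R]
    [PartialOrder R] [StarRing R] [StarOrderedRing R] {V W : Matrix m n R}
    (hV : V.rank = Fintype.card n) (hVW : V * Vᴴ = W * Wᴴ) : ∃ U ∈ unitaryGroup n R, W = V * U := by
  classical
  set G := Vᴴ * V
  have hG : IsUnit G.det := (isUnit_iff_isUnit_det G).mp <|
    isUnit_of_rank_eq_card (by rw [rank_conjTranspose_mul_self, hV])
  have hGV : (1 - V * G⁻¹ * Vᴴ) * V = 0 := by
    rw [Matrix.sub_mul, Matrix.one_mul, Matrix.mul_assoc _ Vᴴ, Matrix.mul_assoc V,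
      nonsing_inv_mul G hG, Matrix.mul_one, sub_self]
  have hGW := mul_eq_zero_of_self_mul_conjTranspose_eq hVW hGV
  rw [Matrix.sub_mul, Matrix.one_mul, sub_eq_zero] at hGW
  have hGinv : (G⁻¹)ᴴ = G⁻¹ := by
    rw [conjTranspose_nonsing_inv, (isHermitian_conjTranspose_mul_self V).eq]
  refine ⟨G⁻¹ * Vᴴ * W, mem_unitaryGroup_iff.mpr ?_, by simpa only [Matrix.mul_assoc] using hGW⟩
  calc G⁻¹ * Vᴴ * W * star (G⁻¹ * Vᴴ * W) = G⁻¹ * (Vᴴ * (W * Wᴴ) * V) * G⁻¹ := by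
        simp only [star_eq_conjTranspose, conjTranspose_mul, conjTranspose_conjTranspose, hGinv,
          Matrix.mul_assoc]
    _ = (G⁻¹ * G) * (G * G⁻¹) := by rw [← hVW]; simp only [G, Matrix.mul_assoc]
    _ = 1 := by rw [nonsing_inv_mul G hG, mul_nonsing_inv G hG, Matrix.one_mul]

end Matrix

section

variable {n d : ℕ}

theorem phiV_mul_transpose_of_mem_unitaryGroup (V : Matrix (Fin n) (Fin d) ℂ)
    {U : Matrix (Fin d) (Fin d) ℂ} (hU : U ∈ unitaryGroup (Fin d) ℂ)
    (X : Matrix (Fin d) (Fin d) ℂ) : phiV (V * Uᵀ) X = phiV V (star U * X * U) := by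
  have hquad (i : Fin n) :
      star ((V * Uᵀ) i) ⬝ᵥ X *ᵥ (V * Uᵀ) i = star (V i) ⬝ᵥ (star U * X * U) *ᵥ V i := by
    simp only [mul_apply_eq_vecMul, vecMul_transpose, star_mulVec, dotProduct_mulVec,
      vecMul_vecMul, mulVec_mulVec, star_eq_conjTranspose, Matrix.mul_assoc]
  have hdet : (star U * X * U).det = X.det := by
    rw [det_mul, det_mul, mul_right_comm, ← det_mul, mem_unitaryGroup_iff'.mp hU, det_one,
      one_mul]
  have htrace : (star U * X * U).trace = X.trace := by
    rw [trace_mul_comm, ← Matrix.mul_assoc, mem_unitaryGroup_iff.mp hU, Matrix.one_mul]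
  simp only [phiV, hquad, hdet, htrace]

theorem PhiV_mul_transpose_of_mem_unitaryGroup (V : Matrix (Fin n) (Fin d) ℂ)
    {U : Matrix (Fin d) (Fin d) ℂ} (hU : U ∈ unitaryGroup (Fin d) ℂ) :
    PhiV (V * Uᵀ) = PhiV V := by
  have hUunit : IsUnit U := IsUnit.of_mul_eq_one (star U) (mem_unitaryGroup_iff.mp hU)
  simp only [PhiV, phiV_mul_transpose_of_mem_unitaryGroup V hU]
  congr 1
  ext r
  constructor
  · rintro ⟨X, hX, rfl⟩
    exact ⟨star U * X * U, (IsUnit.posDef_star_left_conjugate_iff hUunit).mpr hX, rfl⟩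
  · rintro ⟨Y, hY, rfl⟩
    refine ⟨U * Y * star U, (IsUnit.posDef_star_right_conjugate_iff hUunit).mpr hY, ?_⟩
    rw [← Matrix.mul_assoc, ← Matrix.mul_assoc, mem_unitaryGroup_iff'.mp hU, Matrix.one_mul,
      Matrix.mul_assoc, mem_unitaryGroup_iff'.mp hU, Matrix.mul_one]

end

theorem stmt5_general {n d : ℕ} (V W : Matrix (Fin n) (Fin d) ℂ)
    (hV : V.rank = d)
    (hGram : V * Vᴴ = W * Wᴴ) :
    PhiV V = PhiV W := by
  obtain ⟨U, hU, rfl⟩ :=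
    exists_mem_unitaryGroup_of_self_mul_conjTranspose_eq (by rwa [Fintype.card_fin]) hGram
  rw [← transpose_transpose U,
    PhiV_mul_transpose_of_mem_unitaryGroup V (transpose_mem_unitaryGroup_iff.mpr hU)]

theorem stmt5 {n d : ℕ} (V W : Matrix (Fin n) (Fin d) ℂ)
    (hV : V.rank = d) (hW : W.rank = d)
    (hVrows : ∀ i, V i ≠ 0) (hWrows : ∀ i, W i ≠ 0)
    (hGram : V * Vᴴ = W * Wᴴ) :
    PhiV V = PhiV W :=
  stmt5_general V W hV hGram
end

section
/- The permanent of a Hermitian positive semidefinite matrix is a nonnegative real number: if A is an n×n Hermitian positive semidefinite matrix, then per(A) is real and per(A) ≥ 0. -/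
/-!
Write `A = Mᴴ * M`. Expanding the permanent of a product over all maps `f : n → n` gives
`per (Mᴴ * M) = ∑ f, star (per M_f) * ∏ i, M (f i) i`, where `M_f` has rows `M (f i)`.
Precomposing `f` with a permutation leaves `per M_f` unchanged, so averaging over the symmetric
group turns the second factor into `per M_f` as well, and `n! • per A = ∑ f, star (per M_f) * per M_f`
is a sum of squared moduli.
-/

namespace Matrix

open Equiv

variable {m n R : Type*} [Fintype n] [DecidableEq n]

theorem permanent_conjTranspose [CommSemiring R] [StarRing R] (M : Matrix n n R) :
    Mᴴ.permanent = star M.permanent := by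
  rw [← permanent_transpose, permanent, permanent, star_sum]
  simp only [transpose_apply, conjTranspose_apply, star_prod]

theorem permanent_submatrix_comp_perm [CommSemiring R] (M : Matrix m n R) (f : n → m)
    (τ : Perm n) : (M.submatrix (f ∘ τ) id).permanent = (M.submatrix f id).permanent :=
  permanent_permute_cols τ (M.submatrix f id)

variable [Fintype m]

theorem permanent_mul [CommSemiring R] (B : Matrix n m R) (C : Matrix m n R) :
    (B * C).permanent = ∑ f : n → m, (∏ i, C (f i) i) * (B.submatrix id f).permanent := by
  calc (B * C).permanent
      = ∑ σ : Perm n, ∑ f : n → m, ∏ i, B (σ i) (f i) * C (f i) i := by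
        simp only [permanent, mul_apply, Finset.prod_univ_sum, Fintype.piFinset_univ]
    _ = _ := by
        rw [Finset.sum_comm]
        simp only [permanent, submatrix_apply, id, Finset.prod_mul_distrib, Finset.mul_sum,
          mul_comm]

variable [CommSemiring R] [StarRing R]

theorem permanent_conjTranspose_mul_self (M : Matrix m n R) :
    (Mᴴ * M).permanent = ∑ f : n → m, star (M.submatrix f id).permanent * ∏ i, M (f i) i := by
  simp only [permanent_mul, ← conjTranspose_submatrix, permanent_conjTranspose, mul_comm]

theorem card_perm_smul_permanent_conjTranspose_mul_self (M : Matrix m n R) :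
    Fintype.card (Perm n) • (Mᴴ * M).permanent =
      ∑ f : n → m, star (M.submatrix f id).permanent * (M.submatrix f id).permanent := by
  have reindex (τ : Perm n) : (Mᴴ * M).permanent =
      ∑ f : n → m, star (M.submatrix f id).permanent * ∏ i, M (f (τ i)) i := by
    rw [permanent_conjTranspose_mul_self,
      ← (Equiv.arrowCongr τ.symm (Equiv.refl m)).sum_comp]
    refine Finset.sum_congr rfl fun f _ => ?_
    exact congrArg (star · * _) (permanent_submatrix_comp_perm M f τ)
  rw [← Finset.card_univ, ← Finset.sum_const, Finset.sum_congr rfl fun τ _ => reindex τ,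
    Finset.sum_comm]
  simp only [← Finset.mul_sum]
  rfl

theorem card_perm_smul_permanent_conjTranspose_mul_self_nonneg [PartialOrder R]
    [StarOrderedRing R] (M : Matrix m n R) :
    0 ≤ Fintype.card (Perm n) • (Mᴴ * M).permanent := by
  rw [card_perm_smul_permanent_conjTranspose_mul_self]
  exact Finset.sum_nonneg fun f _ => star_mul_self_nonneg _

end Matrix

open Matrix
open scoped ComplexOrder

theorem stmt17 {n : ℕ} (A : Matrix (Fin n) (Fin n) ℂ) (hA : A.PosSemidef) :
    0 ≤ A.permanent := by
  obtain ⟨M, rfl⟩ : ∃ M : Matrix (Fin n) (Fin n) ℂ, A = Mᴴ * M := by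
    open scoped MatrixOrder in
    exact CStarAlgebra.nonneg_iff_eq_star_mul_self.mp hA.nonneg
  have h := card_perm_smul_permanent_conjTranspose_mul_self_nonneg M
  rw [nsmul_eq_mul] at h
  exact le_of_mul_le_mul_left (by simpa using h) (by exact_mod_cast Fintype.card_pos)
end
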